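/- arXiv:math/0703144 — 3 statements merged into one kernel-verified Lean document; each statement's English description precedes it below -/
import Mathlib

section
/- Let u : ℝ³ → ℝ³ be a C¹ vector field that is axisymmetric without swirl, and let Ω = curl u. Then at every point x ∈ ℝ³ with r(x) > 0, the vortex-stretching term satisfies (Ω(x)·∇)u(x) = (u^r(x)/r(x)) · Ω(x), where u^r(x) = (x₁u¹(x)+x₂u²(x))/r(x). -/
noncomputable section
open Real MeasureTheory Set
open scoped ENNReal

/-- `ℝ³` with the Euclidean norm. -/
abbrev E3 : Type := EuclideanSpace ℝ (Fin 3)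

/-- The point `(a, b, c) ∈ ℝ³`. -/
def mk3 (a b c : ℝ) : E3 := WithLp.toLp 2 ![a, b, c]

/-- Partial derivative `∂ᵢ f` of a scalar function on `ℝ³`. -/
def pd (f : E3 → ℝ) (i : Fin 3) (x : E3) : ℝ :=
  fderiv ℝ f x (EuclideanSpace.single i 1)

/-- The curl `(∂₂u³−∂₃u², ∂₃u¹−∂₁u³, ∂₁u²−∂₂u¹)` of a vector field on `ℝ³`
(indices are `0`-based in Lean). -/
def curl3 (u : E3 → E3) (x : E3) : E3 :=
  mk3 (pd (fun y => u y 2) 1 x - pd (fun y => u y 1) 2 x)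
      (pd (fun y => u y 0) 2 x - pd (fun y => u y 2) 0 x)
      (pd (fun y => u y 1) 0 x - pd (fun y => u y 0) 1 x)

/-- Rotation by angle `θ` about the `x₃`-axis. -/
def rotz (θ : ℝ) (x : E3) : E3 :=
  mk3 (Real.cos θ * x 0 - Real.sin θ * x 1) (Real.sin θ * x 0 + Real.cos θ * x 1) (x 2)

/-- A vector field is axisymmetric without swirl: it commutes with all rotations about the
`x₃`-axis and `x₁·u² = x₂·u¹`. -/
def AxisymNoSwirl (u : E3 → E3) : Prop :=
  (∀ θ : ℝ, ∀ x : E3, u (rotz θ x) = rotz θ (u x)) ∧ ∀ x : E3, x 0 * u x 1 = x 1 * u x 0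

/-- Distance to the `x₃`-axis: `r(x) = √(x₁² + x₂²)`. -/
def rr (x : E3) : ℝ := Real.sqrt (x 0 ^ 2 + x 1 ^ 2)

/-- The radial component `u^r(x) = (x₁u¹(x) + x₂u²(x))/r(x)` of a vector field. -/
def ur (u : E3 → E3) (x : E3) : ℝ := (x 0 * u x 0 + x 1 * u x 1) / rr x

lemma hasDerivAt_rotz (x : E3) :
    HasDerivAt (fun θ => rotz θ x) (mk3 (-(x 1)) (x 0) 0) 0 := by
  have hA : (fun θ : ℝ => rotz θ x)
      = fun θ => Real.cos θ • (mk3 (x 0) (x 1) 0 : E3) + Real.sin θ • (mk3 (-(x 1)) (x 0) 0 : E3) + mk3 0 0 (x 2) := by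
    funext θ; ext i
    fin_cases i <;>
      simp [rotz, mk3, PiLp.add_apply, PiLp.smul_apply] <;> ring
  rw [hA]
  have h := (((Real.hasDerivAt_cos 0).smul_const (mk3 (x 0) (x 1) 0 : E3)).add
    ((Real.hasDerivAt_sin 0).smul_const (mk3 (-(x 1)) (x 0) 0 : E3))).add_const (mk3 0 0 (x 2))
  simpa using h

lemma rotz_zero (x : E3) : rotz 0 x = x := by
  ext i; fin_cases i <;> simp [rotz, mk3]

/-- For a `C¹` axisymmetric vector field `u` without swirl with vorticity
`Ω = curl u`, the vortex-stretching term satisfies `(Ω·∇)u = (u^r/r) Ω` wherever `r > 0`. -/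
theorem vortex_stretching_formula (u : E3 → E3) (hu : ContDiff ℝ 1 u)
    (hax : AxisymNoSwirl u) :
    ∀ x : E3, 0 < rr x → ∀ i : Fin 3,
      (∑ j : Fin 3, curl3 u x j * pd (fun y => u y i) j x) =
        (ur u x / rr x) * curl3 u x i := by
  intro x hr i
  have hud : Differentiable ℝ u := hu.differentiable one_ne_zero
  set L := fderiv ℝ u x with hLdef
  have hdu : HasFDerivAt u L x := (hud x).hasFDerivAt
  have hproj : ∀ k : Fin 3, HasFDerivAt (fun y : E3 => u y k) ((EuclideanSpace.proj k).comp L) x := by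
    intro k
    have h := HasFDerivAt.comp (𝕜 := ℝ) x ((EuclideanSpace.proj k).hasFDerivAt) hdu
    exact h
  have hpd : ∀ k j : Fin 3, pd (fun y => u y k) j x = L (EuclideanSpace.single j 1) k := by
    intro k j
    rw [pd, (hproj k).fderiv]; rfl
  -- rotation identity
  have hc1 : HasDerivAt (fun θ => u (rotz θ x)) (L (mk3 (-(x 1)) (x 0) 0)) 0 := by
    have hdu' : HasFDerivAt u L (rotz 0 x) := by rw [rotz_zero]; exact hdu
    exact hdu'.comp_hasDerivAt 0 (hasDerivAt_rotz x)
  have hc2 : HasDerivAt (fun θ => u (rotz θ x)) (mk3 (-(u x 1)) (u x 0) 0) 0 := by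
    have h := hasDerivAt_rotz (u x)
    have he : (fun θ => rotz θ (u x)) = fun θ => u (rotz θ x) := by
      funext θ; exact (hax.1 θ x).symm
    rwa [he] at h
  have hrotkey := hc1.unique hc2
  have hmk : ∀ a b : ℝ, (mk3 a b 0 : E3) = a • EuclideanSpace.single 0 1 + b • EuclideanSpace.single 1 1 := by
    intro a b; ext j
    fin_cases j <;> simp [mk3, EuclideanSpace.single_apply, PiLp.add_apply, PiLp.smul_apply]
  have hE : ∀ k : Fin 3,
      -(x 1) * L (EuclideanSpace.single 0 1) k + x 0 * L (EuclideanSpace.single 1 1) k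
        = (mk3 (-(u x 1)) (u x 0) 0 : E3) k := by
    intro k
    have h1 : (L (mk3 (-(x 1)) (x 0) 0)) k = (mk3 (-(u x 1)) (u x 0) 0 : E3) k := by rw [hrotkey]
    rw [hmk, map_add, _root_.map_smul, _root_.map_smul] at h1
    simpa [PiLp.add_apply, PiLp.smul_apply, smul_eq_mul] using h1
  have hE0 := hE 0
  have hE1 := hE 1
  have hE2 := hE 2
  simp only [mk3, Matrix.cons_val_zero, Matrix.cons_val_one, Matrix.head_cons,
    Matrix.cons_val_two, Matrix.tail_cons] at hE0 hE1 hE2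
  -- no-swirl derivative
  have hFzero : (fun y : E3 => y 0 * u y 1 - y 1 * u y 0) = fun _ => (0:ℝ) := by
    funext y; rw [hax.2 y]; ring
  have hNder : HasFDerivAt (fun y : E3 => y 0 * u y 1 - y 1 * u y 0)
      ((x 0 • ((EuclideanSpace.proj 1).comp L) + u x 1 • (EuclideanSpace.proj (0 : Fin 3))) -
       (x 1 • ((EuclideanSpace.proj 0).comp L) + u x 0 • (EuclideanSpace.proj (1 : Fin 3)))) x :=
    ((EuclideanSpace.proj (0 : Fin 3)).hasFDerivAt.mul (hproj 1)).sub
      ((EuclideanSpace.proj (1 : Fin 3)).hasFDerivAt.mul (hproj 0))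
  have hNzero : HasFDerivAt (fun y : E3 => y 0 * u y 1 - y 1 * u y 0) (0 : E3 →L[ℝ] ℝ) x := by
    rw [hFzero]; exact hasFDerivAt_const 0 x
  have hNkey := hNder.unique hNzero
  have hN : ∀ j : Fin 3,
      x 0 * L (EuclideanSpace.single j 1) 1 + u x 1 * (EuclideanSpace.single j 1 : E3) 0 -
      (x 1 * L (EuclideanSpace.single j 1) 0 + u x 0 * (EuclideanSpace.single j 1 : E3) 1) = 0 := by
    intro j
    have h1 := ContinuousLinearMap.ext_iff.mp hNkey (EuclideanSpace.single j 1)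
    simpa [ContinuousLinearMap.sub_apply, ContinuousLinearMap.add_apply,
      ContinuousLinearMap.smul_apply, ContinuousLinearMap.comp_apply,
      smul_eq_mul] using h1
  have hN0 := hN 0
  have hN1 := hN 1
  have hN2 := hN 2
  simp [EuclideanSpace.single_apply] at hN0 hN1 hN2
  -- radial stuff
  have hspos : (0:ℝ) < x 0 ^ 2 + x 1 ^ 2 := Real.sqrt_pos.mp hr
  have hsne : (x 0 ^ 2 + x 1 ^ 2) ≠ 0 := ne_of_gt hspos
  have hdiv : ur u x / rr x = (x 0 * u x 0 + x 1 * u x 1) / (x 0 ^ 2 + x 1 ^ 2) := by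
    rw [ur, div_div, rr, Real.mul_self_sqrt hspos.le]
  have hNS := hax.2 x
  set p := (x 0 * u x 0 + x 1 * u x 1) / (x 0 ^ 2 + x 1 ^ 2) with hp
  have hu0 : u x 0 = x 0 * p := by
    rw [hp]; field_simp; linear_combination (-(x 1)) * hNS
  have hu1 : u x 1 = x 1 * p := by
    rw [hp]; field_simp; linear_combination x 0 * hNS
  -- Ω2 = 0
  have hz0 : x 0 * (L (EuclideanSpace.single 0 1) 1 - L (EuclideanSpace.single 1 1) 0) = 0 := by
    linear_combination hN0 - hE0
  have hz1 : x 1 * (L (EuclideanSpace.single 0 1) 1 - L (EuclideanSpace.single 1 1) 0) = 0 := by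
    linear_combination hN1 - hE1
  have hOm2 : L (EuclideanSpace.single 0 1) 1 - L (EuclideanSpace.single 1 1) 0 = 0 := by
    have h := mul_eq_zero.mp (show (x 0 ^ 2 + x 1 ^ 2) *
        (L (EuclideanSpace.single 0 1) 1 - L (EuclideanSpace.single 1 1) 0) = 0 by
      linear_combination x 0 * hz0 + x 1 * hz1)
    exact h.resolve_left hsne
  -- azimuthal
  have hAz : x 0 * (L (EuclideanSpace.single 1 1) 2 - L (EuclideanSpace.single 2 1) 1) +
      x 1 * (L (EuclideanSpace.single 2 1) 0 - L (EuclideanSpace.single 0 1) 2) = 0 := by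
    linear_combination hE2 - hN2
  set c := (x 0 * (L (EuclideanSpace.single 2 1) 0 - L (EuclideanSpace.single 0 1) 2) -
      x 1 * (L (EuclideanSpace.single 1 1) 2 - L (EuclideanSpace.single 2 1) 1)) /
      (x 0 ^ 2 + x 1 ^ 2) with hc
  have hc0 : L (EuclideanSpace.single 1 1) 2 - L (EuclideanSpace.single 2 1) 1 = -(x 1) * c := by
    rw [hc]; field_simp; linear_combination (x 0) * hAz
  have hc1' : L (EuclideanSpace.single 2 1) 0 - L (EuclideanSpace.single 0 1) 2 = x 0 * c := by
    rw [hc]; field_simp; linear_combination (x 1) * hAz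
  -- final
  have key : ∀ k : Fin 3,
      curl3 u x 0 * pd (fun y => u y k) 0 x + curl3 u x 1 * pd (fun y => u y k) 1 x +
        curl3 u x 2 * pd (fun y => u y k) 2 x = p * curl3 u x k := by
    have G0 : curl3 u x 0 * pd (fun y => u y 0) 0 x + curl3 u x 1 * pd (fun y => u y 0) 1 x +
        curl3 u x 2 * pd (fun y => u y 0) 2 x = p * curl3 u x 0 := by
      simp only [curl3, mk3, Matrix.cons_val_zero, Matrix.cons_val_one, Matrix.head_cons,
        Matrix.cons_val_two, Matrix.tail_cons, hpd]
      rw [hOm2, hc0, hc1']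
      linear_combination c * hE0 - c * hu1
    have G1 : curl3 u x 0 * pd (fun y => u y 1) 0 x + curl3 u x 1 * pd (fun y => u y 1) 1 x +
        curl3 u x 2 * pd (fun y => u y 1) 2 x = p * curl3 u x 1 := by
      simp only [curl3, mk3, Matrix.cons_val_zero, Matrix.cons_val_one, Matrix.head_cons,
        Matrix.cons_val_two, Matrix.tail_cons, hpd]
      rw [hOm2, hc0, hc1']
      linear_combination c * hE1 + c * hu0
    have G2 : curl3 u x 0 * pd (fun y => u y 2) 0 x + curl3 u x 1 * pd (fun y => u y 2) 1 x +
        curl3 u x 2 * pd (fun y => u y 2) 2 x = p * curl3 u x 2 := by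
      simp only [curl3, mk3, Matrix.cons_val_zero, Matrix.cons_val_one, Matrix.head_cons,
        Matrix.cons_val_two, Matrix.tail_cons, hpd]
      rw [hOm2, hc0, hc1']
      linear_combination c * hE2
    intro k
    fin_cases k
    · exact G0
    · exact G1
    · exact G2
  rw [Fin.sum_univ_three, hdiv]
  exact key i
end
end

section
/- Let 0 < ε < 1 and let v : ℝ³ → ℝ be a C¹ function with v(x₁, 0, z) = 0 for all x₁, z ∈ ℝ, such that ∂₂v is bounded and ε-Hölder: |∂₂v(x) − ∂₂v(y)| ≤ K|x − y|^ε for all x, y ∈ ℝ³. Define w : ℝ³ → ℝ by w(x) = v(x)/x₂ when x₂ ≠ 0 and w(x₁, 0, z) = ∂₂v(x₁, 0, z). Then sup_{x} |w(x)| ≤ sup_{x} |∂₂v(x)| and |w(x) − w(y)| ≤ K|x − y|^ε for all x, y ∈ ℝ³. -/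
noncomputable section
open Real MeasureTheory Set
open scoped ENNReal

def sline (x : E3) (t : ℝ) : E3 := x + ((t - 1) * x 1) • EuclideanSpace.single 1 1

lemma sline_apply (x : E3) (t : ℝ) (i : Fin 3) :
    sline x t i = x i + (t - 1) * x 1 * (if i = 1 then 1 else 0) := by
  simp [sline, EuclideanSpace.single_apply]

lemma sline_one (x : E3) : sline x 1 = x := by
  simp [sline]

lemma sline_zero (x : E3) : sline x 0 = mk3 (x 0) 0 (x 2) := by
  ext i
  fin_cases i <;> simp [sline_apply, mk3] <;> ring

lemma sline_of_coord_zero (x : E3) (hx : x 1 = 0) (t : ℝ) : sline x t = x := by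
  simp [sline, hx]

lemma hasDerivAt_sline (x : E3) (t : ℝ) :
    HasDerivAt (sline x) ((x 1) • EuclideanSpace.single (1 : Fin 3) (1:ℝ)) t := by
  have h1 : HasDerivAt (fun s : ℝ => (s - 1) * x 1) (x 1) t := by
    simpa using ((hasDerivAt_id t).sub_const 1).mul_const (x 1)
  exact ((h1.smul_const (EuclideanSpace.single (1:Fin 3) (1:ℝ)))).const_add x

lemma sline_sub_norm_le (x y : E3) (t : ℝ) (ht0 : 0 ≤ t) (ht1 : t ≤ 1) :
    ‖sline x t - sline y t‖ ≤ ‖x - y‖ := by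
  rw [EuclideanSpace.norm_eq, EuclideanSpace.norm_eq]
  apply Real.sqrt_le_sqrt
  apply Finset.sum_le_sum
  intro i _
  simp only [PiLp.sub_apply, Real.norm_eq_abs, sq_abs]
  by_cases hi : i = 1
  · subst hi
    have h : sline x t 1 - sline y t 1 = t * (x 1 - y 1) := by
      simp [sline_apply]; ring
    rw [h]
    have habs : |t * (x 1 - y 1)| ≤ |x 1 - y 1| := by
      rw [abs_mul]
      calc |t| * |x 1 - y 1| ≤ 1 * |x 1 - y 1| := by
            apply mul_le_mul_of_nonneg_right _ (abs_nonneg _)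
            rw [abs_of_nonneg ht0]; exact ht1
        _ = |x 1 - y 1| := one_mul _
    calc (t * (x 1 - y 1)) ^ 2 = |t * (x 1 - y 1)| ^ 2 := (sq_abs _).symm
      _ ≤ |x 1 - y 1| ^ 2 := pow_le_pow_left₀ (abs_nonneg _) habs 2
      _ = (x 1 - y 1) ^ 2 := sq_abs _
  · have h : sline x t i - sline y t i = x i - y i := by
      simp [sline_apply, hi]
    rw [h]

/-- key lemma. Let `0 < ε < 1` and let `v` be `C¹`, vanishing on the plane
`{x₂ = 0}`, with `∂₂v` bounded and `ε`-Hölder with constant `K`. Then the quotient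
`w = v/x₂` (extended by `∂₂v` on `{x₂ = 0}`) satisfies `sup|w| ≤ sup|∂₂v|` and is `ε`-Hölder
with the same constant `K`. -/
theorem divide_by_x2_holder (ε K : ℝ) (hε : 0 < ε) (hε1 : ε < 1)
    (v : E3 → ℝ) (hv : ContDiff ℝ 1 v)
    (h0 : ∀ x₁ z : ℝ, v (mk3 x₁ 0 z) = 0)
    (hbdd : ∃ M : ℝ, ∀ x : E3, |pd v 1 x| ≤ M)
    (hK : ∀ x y : E3, |pd v 1 x - pd v 1 y| ≤ K * ‖x - y‖ ^ ε)
    (w : E3 → ℝ)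
    (hw : ∀ x : E3, w x = if x 1 = 0 then pd v 1 x else v x / x 1) :
    (∀ M : ℝ, (∀ x : E3, |pd v 1 x| ≤ M) → ∀ x : E3, |w x| ≤ M) ∧
      ∀ x y : E3, |w x - w y| ≤ K * ‖x - y‖ ^ ε := by
  have hvd : Differentiable ℝ v := hv.differentiable one_ne_zero
  -- continuity of t ↦ pd v 1 (sline x t)
  have hcont : ∀ x : E3, Continuous (fun t : ℝ => pd v 1 (sline x t)) := by
    intro x
    have h1 : Continuous (fderiv ℝ v) := hv.continuous_fderiv one_ne_zero
    have h2 : Continuous (sline x) := by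
      have := fun t => (hasDerivAt_sline x t).continuousAt
      exact continuous_iff_continuousAt.2 this
    exact (ContinuousLinearMap.apply ℝ ℝ (EuclideanSpace.single (1:Fin 3) (1:ℝ))).continuous.comp (h1.comp h2)
  have hint : ∀ x : E3, IntervalIntegrable (fun t : ℝ => pd v 1 (sline x t)) volume 0 1 :=
    fun x => (hcont x).intervalIntegrable 0 1
  -- integral representation
  have hrep : ∀ x : E3, w x = ∫ t in (0:ℝ)..1, pd v 1 (sline x t) := by
    intro x
    by_cases hx : x 1 = 0
    · rw [hw x, if_pos hx]
      simp [sline_of_coord_zero x hx]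
    · rw [hw x, if_neg hx]
      have hderiv : ∀ t ∈ Set.uIcc (0:ℝ) 1,
          HasDerivAt (fun t => v (sline x t)) (x 1 * pd v 1 (sline x t)) t := by
        intro t _
        have h1 := (hvd (sline x t)).hasFDerivAt.comp_hasDerivAt t (hasDerivAt_sline x t)
        have : fderiv ℝ v (sline x t) ((x 1) • EuclideanSpace.single (1:Fin 3) (1:ℝ))
            = x 1 * pd v 1 (sline x t) := by
          rw [_root_.map_smul]; simp [pd]
        rwa [this] at h1
      have hint2 : IntervalIntegrable (fun t : ℝ => x 1 * pd v 1 (sline x t)) volume 0 1 :=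
        (hint x).const_mul _
      have := intervalIntegral.integral_eq_sub_of_hasDerivAt hderiv hint2
      rw [sline_one, sline_zero, h0] at this
      rw [intervalIntegral.integral_const_mul] at this
      field_simp
      linarith [this]
  have hK0 : 0 ≤ K := by
    have h := hK (EuclideanSpace.single 1 1) 0
    have h1 : ‖(EuclideanSpace.single (1:Fin 3) (1:ℝ)) - 0‖ = 1 := by
      simp [EuclideanSpace.norm_single]
    rw [h1, Real.one_rpow, mul_one] at h
    exact le_trans (abs_nonneg _) h
  constructor
  · intro M hM x
    rw [hrep x]
    have := intervalIntegral.norm_integral_le_of_norm_le_const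
      (C := M) (f := fun t : ℝ => pd v 1 (sline x t)) (a := 0) (b := 1)
      (fun t _ => by simpa [Real.norm_eq_abs] using hM (sline x t))
    simpa [Real.norm_eq_abs] using this
  · intro x y
    by_cases hxy : x = y
    · subst hxy
      simp [Real.rpow_natCast]
      positivity
    · rw [hrep x, hrep y, ← intervalIntegral.integral_sub (hint x) (hint y)]
      have hbound : ∀ t ∈ Set.uIoc (0:ℝ) 1,
          ‖pd v 1 (sline x t) - pd v 1 (sline y t)‖ ≤ K * ‖x - y‖ ^ ε := by
        intro t ht
        rw [Set.uIoc_of_le (by norm_num : (0:ℝ) ≤ 1)] at ht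
        have h1 := hK (sline x t) (sline y t)
        have h2 : ‖sline x t - sline y t‖ ≤ ‖x - y‖ :=
          sline_sub_norm_le x y t ht.1.le ht.2
        have h3 : ‖sline x t - sline y t‖ ^ ε ≤ ‖x - y‖ ^ ε :=
          Real.rpow_le_rpow (norm_nonneg _) h2 hε.le
        calc ‖pd v 1 (sline x t) - pd v 1 (sline y t)‖
            ≤ K * ‖sline x t - sline y t‖ ^ ε := h1
          _ ≤ K * ‖x - y‖ ^ ε := by
              exact mul_le_mul_of_nonneg_left h3 hK0
      have := intervalIntegral.norm_integral_le_of_norm_le_const hbound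
      simpa [Real.norm_eq_abs] using this
end
end

section
/- Let 0 < s < 1. There is a constant C depending only on s with the following property. Let T > 0, let u : [0,T] × ℝ³ → ℝ³ be continuous with ∇ₓu(t,·) bounded for each t and V(t) := ‖∇ₓu(t)‖_{L^∞} integrable on [0,T], let g : [0,T] × ℝ³ → ℝ be continuous with t ↦ ‖g(t)‖_{C^s} integrable, and let f : [0,T] × ℝ³ → ℝ be a bounded C¹ solution of ∂ₜf + (u·∇)f = g with f(0,·) = f₀, where ‖f₀‖_{C^s} < ∞. Then for every t ∈ [0,T], ‖f(t)‖_{C^s} ≤ C · exp( C ∫₀ᵗ V(τ) dτ ) · ( ‖f₀‖_{C^s} + ∫₀ᵗ ‖g(τ)‖_{C^s} dτ ). -/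
noncomputable section
open Real MeasureTheory Set
open scoped ENNReal

/-- The Hölder `C^s` norm `sup|v| + sup_{x≠y} |v(x)−v(y)|/|x−y|^s`, valued in `[0,∞]`. -/
def holderNorm (s : ℝ) (v : E3 → ℝ) : ℝ≥0∞ :=
  (⨆ x : E3, ENNReal.ofReal |v x|) +
    ⨆ x : E3, ⨆ y : E3, ⨆ _ : x ≠ y, ENNReal.ofReal (|v x - v y| / ‖x - y‖ ^ s)

open scoped NNReal

/-- expansion in the standard basis -/
lemma sum_single_eq (v : E3) : ∑ j : Fin 3, v j • EuclideanSpace.single j (1:ℝ) = v := by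
  ext i
  simp only [WithLp.ofLp_sum, Finset.sum_apply]
  rw [Fin.sum_univ_three]
  fin_cases i <;>
    simp [EuclideanSpace.single_apply, PiLp.smul_apply, smul_eq_mul]

lemma primitive_hasDerivAt {F : Type*} [NormedAddCommGroup F] [NormedSpace ℝ F]
    [CompleteSpace F] {h : ℝ → F} (hh : Continuous h) (a τ : ℝ) :
    HasDerivAt (fun r => ∫ σ in a..r, h σ) (h τ) τ :=
  intervalIntegral.integral_hasDerivAt_right (hh.intervalIntegrable _ _)
    (hh.stronglyMeasurableAtFilter _ _) hh.continuousAt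

/-- pointwise sup-part bound -/
lemma ofReal_abs_le_holderNorm (s : ℝ) (v : E3 → ℝ) (p : E3) :
    ENNReal.ofReal |v p| ≤ holderNorm s v :=
  le_trans (le_iSup (fun x : E3 => ENNReal.ofReal |v x|) p) le_self_add

/-- pointwise Hölder-part bound -/
lemma ofReal_abs_sub_le_holderNorm (s : ℝ) (v : E3 → ℝ) (p q : E3) :
    ENNReal.ofReal |v p - v q| ≤ holderNorm s v * ENNReal.ofReal (‖p - q‖ ^ s) := by
  rcases eq_or_ne p q with rfl | hne
  · simp
  · have hr : (0:ℝ) < ‖p - q‖ ^ s := by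
      apply Real.rpow_pos_of_pos
      simpa [sub_ne_zero] using hne
    have h1 : ENNReal.ofReal |v p - v q|
        = ENNReal.ofReal (|v p - v q| / ‖p - q‖ ^ s) * ENNReal.ofReal (‖p - q‖ ^ s) := by
      rw [← ENNReal.ofReal_mul (by positivity), div_mul_cancel₀ _ hr.ne']
    rw [h1]
    refine mul_le_mul_left ?_ _
    refine le_trans ?_ (le_add_self :
      (⨆ x : E3, ⨆ y : E3, ⨆ _ : x ≠ y, ENNReal.ofReal (|v x - v y| / ‖x - y‖ ^ s))
        ≤ holderNorm s v)
    exact le_iSup_of_le p (le_iSup_of_le q (le_iSup_of_le hne le_rfl))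

section flow
variable {T : ℝ} {u : ℝ → E3 → E3} {V : ℝ → ℝ}

lemma lip_of_fderiv (hud : ∀ t ∈ Icc (0:ℝ) T, Differentiable ℝ (u t))
    (huV : ∀ t ∈ Icc (0:ℝ) T, ∀ x : E3, ‖fderiv ℝ (u t) x‖ ≤ V t)
    {σ : ℝ} (hσ : σ ∈ Icc (0:ℝ) T) (p q : E3) : ‖u σ p - u σ q‖ ≤ V σ * ‖p - q‖ :=
  Convex.norm_image_sub_le_of_norm_fderiv_le (fun y _ => (hud σ hσ) y)
    (fun y _ => huV σ hσ y) convex_univ (mem_univ q) (mem_univ p)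

lemma V_nonneg (huV : ∀ t ∈ Icc (0:ℝ) T, ∀ x : E3, ‖fderiv ℝ (u t) x‖ ≤ V t)
    {σ : ℝ} (hσ : σ ∈ Icc (0:ℝ) T) : 0 ≤ V σ :=
  le_trans (norm_nonneg _) (huV σ hσ 0)

lemma intervalIntegrable_V (hVi : IntegrableOn V (Icc (0:ℝ) T))
    {c d : ℝ} (h0c : 0 ≤ c) (hcd : c ≤ d) (hdT : d ≤ T) :
    IntervalIntegrable V volume c d := by
  apply IntegrableOn.intervalIntegrable
  apply hVi.mono_set
  rw [uIcc_of_le hcd]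
  exact Icc_subset_Icc h0c hdT

lemma flow_exists (hu : Continuous fun p : ℝ × E3 => u p.1 p.2)
    (hud : ∀ t ∈ Icc (0:ℝ) T, Differentiable ℝ (u t))
    (huV : ∀ t ∈ Icc (0:ℝ) T, ∀ x : E3, ‖fderiv ℝ (u t) x‖ ≤ V t)
    (hVi : IntegrableOn V (Icc (0:ℝ) T))
    {a b : ℝ} (h0a : 0 ≤ a) (hab : a ≤ b) (hbT : b ≤ T)
    (hhalf : (∫ σ in a..b, V σ) ≤ 1/2) (x : E3) :
    ∃ X : ℝ → E3, Continuous X ∧ ∀ τ ∈ Icc a b, X τ = x - ∫ σ in τ..b, u σ (X σ) := by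
  have habT : Icc a b ⊆ Icc (0:ℝ) T := Icc_subset_Icc h0a hbT
  haveI : Nonempty C(Icc a b, E3) := ⟨ContinuousMap.const _ x⟩
  have hcont_ext : ∀ X : C(Icc a b, E3), Continuous fun σ => u σ (IccExtend hab X σ) :=
    fun X => hu.comp (continuous_id.prodMk (X.continuous.Icc_extend' (h := hab)))
  have hsplit : ∀ (X : C(Icc a b, E3)) (τ : ℝ),
      (∫ σ in τ..b, u σ (IccExtend hab X σ))
        = (∫ σ in a..b, u σ (IccExtend hab X σ)) - ∫ σ in a..τ, u σ (IccExtend hab X σ) := by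
    intro X τ
    rw [eq_sub_iff_add_eq, add_comm]
    exact intervalIntegral.integral_add_adjacent_intervals
      ((hcont_ext X).intervalIntegrable _ _) ((hcont_ext X).intervalIntegrable _ _)
  set Φf : C(Icc a b, E3) → ℝ → E3 :=
    fun X τ => x - ∫ σ in τ..b, u σ (IccExtend hab X σ) with hΦf
  have hΦcont : ∀ X : C(Icc a b, E3), Continuous (Φf X) := by
    intro X
    have hP : Continuous fun τ : ℝ => ∫ σ in a..τ, u σ (IccExtend hab X σ) :=
      continuous_iff_continuousAt.2 fun τ =>
        (primitive_hasDerivAt (hcont_ext X) a τ).continuousAt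
    have heq : Φf X = fun τ => x - ((∫ σ in a..b, u σ (IccExtend hab X σ))
        - ∫ σ in a..τ, u σ (IccExtend hab X σ)) := by
      funext τ
      show x - _ = _
      rw [hsplit X τ]
    rw [heq]
    exact continuous_const.sub (continuous_const.sub hP)
  set Φ : C(Icc a b, E3) → C(Icc a b, E3) :=
    fun X => ⟨fun τ => Φf X τ.1, (hΦcont X).comp continuous_subtype_val⟩ with hΦ
  have hΦlip : ∀ X Y : C(Icc a b, E3), dist (Φ X) (Φ Y) ≤ (1/2) * dist X Y := by
    intro X Y
    rw [ContinuousMap.dist_le (by positivity)]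
    rintro ⟨τ, hτa, hτb⟩
    have hτ0 : (0:ℝ) ≤ τ := le_trans h0a hτa
    have hτT : τ ≤ T := le_trans hτb hbT
    have hXY : ∀ σ : ℝ, σ ∈ Icc τ b →
        ‖u σ (IccExtend hab X σ) - u σ (IccExtend hab Y σ)‖ ≤ V σ * dist X Y := by
      intro σ hσ
      have hσT : σ ∈ Icc (0:ℝ) T := ⟨le_trans hτ0 hσ.1, le_trans hσ.2 hbT⟩
      refine le_trans (lip_of_fderiv hud huV hσT _ _) ?_
      refine mul_le_mul_of_nonneg_left ?_ (V_nonneg huV hσT)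
      rw [IccExtend_apply, IccExtend_apply, ← dist_eq_norm]
      exact ContinuousMap.dist_apply_le_dist _
    have hd : dist ((Φ X) ⟨τ, hτa, hτb⟩) ((Φ Y) ⟨τ, hτa, hτb⟩)
        = ‖∫ σ in τ..b, (u σ (IccExtend hab X σ) - u σ (IccExtend hab Y σ))‖ := by
      show dist (x - _) (x - _) = _
      rw [dist_eq_norm, sub_sub_sub_cancel_left, ← norm_sub_rev,
        intervalIntegral.integral_sub ((hcont_ext X).intervalIntegrable _ _)
          ((hcont_ext Y).intervalIntegrable _ _)]
    have hVτb : IntervalIntegrable V volume τ b := intervalIntegrable_V hVi hτ0 hτb hbT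
    have h1 : ‖∫ σ in τ..b, (u σ (IccExtend hab X σ) - u σ (IccExtend hab Y σ))‖
        ≤ ∫ σ in τ..b, ‖u σ (IccExtend hab X σ) - u σ (IccExtend hab Y σ)‖ :=
      intervalIntegral.norm_integral_le_integral_norm hτb
    have h2 : (∫ σ in τ..b, ‖u σ (IccExtend hab X σ) - u σ (IccExtend hab Y σ)‖)
        ≤ ∫ σ in τ..b, V σ * dist X Y :=
      intervalIntegral.integral_mono_on hτb
        (((hcont_ext X).sub (hcont_ext Y)).norm.intervalIntegrable _ _)
        (hVτb.mul_const _) hXY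
    have h3 : (∫ σ in τ..b, V σ * dist X Y) = (∫ σ in τ..b, V σ) * dist X Y :=
      intervalIntegral.integral_mul_const _ _
    have h4 : (∫ σ in τ..b, V σ) ≤ 1/2 := by
      have hadd : (∫ σ in a..τ, V σ) + (∫ σ in τ..b, V σ) = ∫ σ in a..b, V σ :=
        intervalIntegral.integral_add_adjacent_intervals
          (intervalIntegrable_V hVi h0a hτa hτT) hVτb
      have hnn : 0 ≤ ∫ σ in a..τ, V σ :=
        intervalIntegral.integral_nonneg hτa
          (fun σ hσ => V_nonneg huV ⟨le_trans h0a hσ.1, le_trans hσ.2 hτT⟩)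
      linarith
    rw [hd]
    refine le_trans h1 (le_trans h2 ?_)
    rw [h3]
    exact mul_le_mul_of_nonneg_right h4 (dist_nonneg (x := X) (y := Y))
  have hΦc : ContractingWith (1/2 : ℝ≥0) Φ := by
    constructor
    · rw [← NNReal.coe_lt_coe]; norm_num
    · refine LipschitzWith.of_dist_le_mul fun X Y => ?_
      refine le_trans (hΦlip X Y) ?_
      norm_num
  obtain ⟨X₀, hX₀⟩ : ∃ X₀ : C(Icc a b, E3), Φ X₀ = X₀ :=
    ⟨ContractingWith.fixedPoint Φ hΦc, ContractingWith.fixedPoint_isFixedPt hΦc⟩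
  refine ⟨IccExtend hab X₀, X₀.continuous.Icc_extend' (h := hab), fun τ hτ => ?_⟩
  conv_lhs => rw [IccExtend_of_mem hab X₀ hτ, ← hX₀]
  rfl

lemma flows_close (hud : ∀ t ∈ Icc (0:ℝ) T, Differentiable ℝ (u t))
    (huV : ∀ t ∈ Icc (0:ℝ) T, ∀ x : E3, ‖fderiv ℝ (u t) x‖ ≤ V t)
    (hVi : IntegrableOn V (Icc (0:ℝ) T))
    (hu : Continuous fun p : ℝ × E3 => u p.1 p.2)
    {a b : ℝ} (h0a : 0 ≤ a) (hab : a ≤ b) (hbT : b ≤ T)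
    (hhalf : (∫ σ in a..b, V σ) ≤ 1/2) {x y : E3} {X Y : ℝ → E3}
    (hX : Continuous X) (hXeq : ∀ τ ∈ Icc a b, X τ = x - ∫ σ in τ..b, u σ (X σ))
    (hY : Continuous Y) (hYeq : ∀ τ ∈ Icc a b, Y τ = y - ∫ σ in τ..b, u σ (Y σ)) :
    ∀ τ ∈ Icc a b, ‖X τ - Y τ‖ ≤ 2 * ‖x - y‖ := by
  have habT : Icc a b ⊆ Icc (0:ℝ) T := Icc_subset_Icc h0a hbT
  have hφc : ContinuousOn (fun τ => ‖X τ - Y τ‖) (Icc a b) :=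
    ((hX.sub hY).norm).continuousOn
  obtain ⟨τ₀, hτ₀, hmax⟩ := isCompact_Icc.exists_isMaxOn (nonempty_Icc.2 hab) hφc
  set m := ‖X τ₀ - Y τ₀‖ with hm
  have hm0 : 0 ≤ m := norm_nonneg _
  have huX : Continuous fun σ => u σ (X σ) := hu.comp (continuous_id.prodMk hX)
  have huY : Continuous fun σ => u σ (Y σ) := hu.comp (continuous_id.prodMk hY)
  have hkey : m ≤ ‖x - y‖ + m * (1/2) := by
    have h0 : X τ₀ - Y τ₀ = (x - y) - ∫ σ in τ₀..b, (u σ (X σ) - u σ (Y σ)) := by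
      rw [hXeq τ₀ hτ₀, hYeq τ₀ hτ₀,
        intervalIntegral.integral_sub (huX.intervalIntegrable _ _) (huY.intervalIntegrable _ _)]
      abel
    have h1 : m ≤ ‖x - y‖ + ‖∫ σ in τ₀..b, (u σ (X σ) - u σ (Y σ))‖ := by
      rw [hm, h0]
      exact norm_sub_le _ _
    have h2 : ‖∫ σ in τ₀..b, (u σ (X σ) - u σ (Y σ))‖ ≤ m * (1/2) := by
      refine le_trans (intervalIntegral.norm_integral_le_integral_norm hτ₀.2) ?_
      have hVτb : IntervalIntegrable V volume τ₀ b :=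
        intervalIntegrable_V hVi (le_trans h0a hτ₀.1) hτ₀.2 hbT
      have hp : ∀ σ ∈ Icc τ₀ b, ‖u σ (X σ) - u σ (Y σ)‖ ≤ V σ * m := by
        intro σ hσ
        have hσab : σ ∈ Icc a b := ⟨le_trans hτ₀.1 hσ.1, hσ.2⟩
        refine le_trans (lip_of_fderiv hud huV (habT hσab) _ _) ?_
        exact mul_le_mul_of_nonneg_left (hmax hσab) (V_nonneg huV (habT hσab))
      refine le_trans (intervalIntegral.integral_mono_on hτ₀.2
        ((huX.sub huY).norm.intervalIntegrable _ _) (hVτb.mul_const _) hp) ?_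
      rw [intervalIntegral.integral_mul_const]
      have h4 : (∫ σ in τ₀..b, V σ) ≤ 1/2 := by
        have hadd : (∫ σ in a..τ₀, V σ) + (∫ σ in τ₀..b, V σ) = ∫ σ in a..b, V σ :=
          intervalIntegral.integral_add_adjacent_intervals
            (intervalIntegrable_V hVi h0a hτ₀.1 (le_trans hτ₀.2 hbT)) hVτb
        have hnn : 0 ≤ ∫ σ in a..τ₀, V σ :=
          intervalIntegral.integral_nonneg hτ₀.1
            (fun σ hσ => V_nonneg huV (habT ⟨hσ.1, le_trans hσ.2 hτ₀.2⟩))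
        linarith
      calc (∫ σ in τ₀..b, V σ) * m ≤ (1/2) * m := mul_le_mul_of_nonneg_right h4 hm0
        _ = m * (1/2) := mul_comm _ _
    linarith
  have hm2 : m ≤ 2 * ‖x - y‖ := by linarith
  exact fun τ hτ => le_trans (hmax hτ) hm2

end flow

section transport
variable {T : ℝ} {u : ℝ → E3 → E3} {g f : ℝ → E3 → ℝ}

lemma fderiv_decomp (hf : ContDiff ℝ 1 (fun p : ℝ × E3 => f p.1 p.2)) (t : ℝ) (p w : E3) :
    (fderiv ℝ (fun q : ℝ × E3 => f q.1 q.2) (t, p)) (1, w)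
      = deriv (fun τ => f τ p) t + ∑ j : Fin 3, w j * pd (f t) j p := by
  have hdF : HasFDerivAt (fun q : ℝ × E3 => f q.1 q.2)
      (fderiv ℝ (fun q : ℝ × E3 => f q.1 q.2) (t, p)) (t, p) :=
    (hf.differentiable one_ne_zero (t, p)).hasFDerivAt
  set D := fderiv ℝ (fun q : ℝ × E3 => f q.1 q.2) (t, p) with hD
  have h10 : D ((1:ℝ), (0:E3)) = deriv (fun τ => f τ p) t := by
    have hc : HasDerivAt (fun τ : ℝ => (τ, p)) ((1 : ℝ), (0 : E3)) t :=
      (hasDerivAt_id t).prodMk (hasDerivAt_const t p)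
    have h := hdF.comp_hasDerivAt t hc
    exact (h.deriv).symm
  have hJ : HasFDerivAt (f t) (D.comp (ContinuousLinearMap.inr ℝ ℝ E3)) p := by
    have hι : HasFDerivAt (fun q : E3 => ((t : ℝ), q))
        (ContinuousLinearMap.inr ℝ ℝ E3) p := hasFDerivAt_prodMk_right t p
    exact hdF.comp p hι
  have hsingle : ∀ j : Fin 3, D ((0:ℝ), EuclideanSpace.single j (1:ℝ)) = pd (f t) j p := by
    intro j
    rw [pd, hJ.fderiv]
    simp
  have hw : D ((0:ℝ), w) = ∑ j : Fin 3, w j * pd (f t) j p := by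
    have h1 : D ((0:ℝ), w) = (D.comp (ContinuousLinearMap.inr ℝ ℝ E3)) w := by simp
    rw [h1]
    conv_lhs => rw [← sum_single_eq w]
    rw [map_sum]
    refine Finset.sum_congr rfl fun j _ => ?_
    rw [_root_.map_smul, smul_eq_mul, ← hsingle j]
    congr 1
  have hsplitv : ((1:ℝ), w) = ((1:ℝ), (0:E3)) + ((0:ℝ), w) := by
    simp
  rw [hsplitv, map_add, h10, hw]

lemma ftc_along_flow (hu : Continuous fun p : ℝ × E3 => u p.1 p.2)
    (hg : Continuous fun p : ℝ × E3 => g p.1 p.2)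
    (hf : ContDiff ℝ 1 (fun p : ℝ × E3 => f p.1 p.2))
    (hpde : ∀ t ∈ Icc (0:ℝ) T, ∀ x : E3,
      deriv (fun τ => f τ x) t + (∑ j : Fin 3, u t x j * pd (f t) j x) = g t x)
    {a b : ℝ} (h0a : 0 ≤ a) (hab : a ≤ b) (hbT : b ≤ T)
    {x : E3} {X : ℝ → E3} (hX : Continuous X)
    (hXeq : ∀ τ ∈ Icc a b, X τ = x - ∫ σ in τ..b, u σ (X σ)) :
    f b (X b) = f a (X a) + ∫ σ in a..b, g σ (X σ) := by
  have huX : Continuous fun σ => u σ (X σ) := hu.comp (continuous_id.prodMk hX)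
  have hgX : Continuous fun σ => g σ (X σ) := hg.comp (continuous_id.prodMk hX)
  have hXd : ∀ τ ∈ Ioo a b, HasDerivAt X (u τ (X τ)) τ := by
    intro τ hτ
    have heq : ∀ r ∈ Ioo a b,
        X r = (x - ∫ σ in a..b, u σ (X σ)) + ∫ σ in a..r, u σ (X σ) := by
      intro r hr
      rw [hXeq r ⟨le_of_lt hr.1, le_of_lt hr.2⟩]
      have hadj : (∫ σ in a..r, u σ (X σ)) + (∫ σ in r..b, u σ (X σ))
          = ∫ σ in a..b, u σ (X σ) :=
        intervalIntegral.integral_add_adjacent_intervals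
          (huX.intervalIntegrable _ _) (huX.intervalIntegrable _ _)
      rw [← hadj]
      abel
    have hder : HasDerivAt (fun r => (x - ∫ σ in a..b, u σ (X σ)) + ∫ σ in a..r, u σ (X σ))
        (u τ (X τ)) τ := (primitive_hasDerivAt huX a τ).const_add _
    refine hder.congr_of_eventuallyEq ?_
    filter_upwards [Ioo_mem_nhds hτ.1 hτ.2] with r hr
    exact heq r hr
  have hFd : ∀ τ ∈ Ioo a b, HasDerivAt (fun r => f r (X r)) (g τ (X τ)) τ := by
    intro τ hτ
    have hτT : τ ∈ Icc (0:ℝ) T :=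
      ⟨le_trans h0a (le_of_lt hτ.1), le_trans (le_of_lt hτ.2) hbT⟩
    have hdF : HasFDerivAt (fun q : ℝ × E3 => f q.1 q.2)
        (fderiv ℝ (fun q : ℝ × E3 => f q.1 q.2) (τ, X τ)) (τ, X τ) :=
      (hf.differentiable one_ne_zero _).hasFDerivAt
    have hγ : HasDerivAt (fun r => (r, X r)) ((1:ℝ), u τ (X τ)) τ :=
      (hasDerivAt_id τ).prodMk (hXd τ hτ)
    have hcomp := hdF.comp_hasDerivAt τ hγ
    have hval : fderiv ℝ (fun q : ℝ × E3 => f q.1 q.2) (τ, X τ) (1, u τ (X τ)) = g τ (X τ) := by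
      rw [fderiv_decomp hf]
      exact hpde τ hτT (X τ)
    rw [hval] at hcomp
    exact hcomp
  have hcont : ContinuousOn (fun r => f r (X r)) (Icc a b) :=
    (hf.continuous.comp (continuous_id.prodMk hX)).continuousOn
  have hint := intervalIntegral.integral_eq_sub_of_hasDerivAt_of_le hab hcont hFd
    (hgX.intervalIntegrable _ _)
  linarith [hint]

end transport

section step
variable {s T : ℝ} {u : ℝ → E3 → E3} {g f : ℝ → E3 → ℝ} {V : ℝ → ℝ}

lemma ofReal_abs_intervalIntegral_le {a b : ℝ} (hab : a ≤ b) {h : ℝ → ℝ}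
    (hh : Continuous h) {B : ℝ → ℝ≥0∞}
    (hB : ∀ σ ∈ Ioc a b, ENNReal.ofReal |h σ| ≤ B σ) :
    ENNReal.ofReal |∫ σ in a..b, h σ| ≤ ∫⁻ σ in Ioc a b, B σ := by
  have h1 : |∫ σ in a..b, h σ| ≤ ∫ σ in a..b, |h σ| := by
    have := intervalIntegral.norm_integral_le_integral_norm (f := h) (μ := volume) hab
    simpa [Real.norm_eq_abs] using this
  have h2 : (∫ σ in a..b, |h σ|) = ∫ σ in Ioc a b, |h σ| :=
    intervalIntegral.integral_of_le hab
  have hint : IntegrableOn (fun σ => |h σ|) (Ioc a b) :=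
    (hh.abs.integrableOn_Icc).mono_set Ioc_subset_Icc_self
  have h3 : ENNReal.ofReal (∫ σ in Ioc a b, |h σ|)
      = ∫⁻ σ in Ioc a b, ENNReal.ofReal |h σ| :=
    ofReal_integral_eq_lintegral_ofReal hint
      (Filter.Eventually.of_forall fun σ => abs_nonneg _)
  calc ENNReal.ofReal |∫ σ in a..b, h σ|
      ≤ ENNReal.ofReal (∫ σ in Ioc a b, |h σ|) := by
        rw [← h2]; exact ENNReal.ofReal_le_ofReal h1
    _ = ∫⁻ σ in Ioc a b, ENNReal.ofReal |h σ| := h3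
    _ ≤ ∫⁻ σ in Ioc a b, B σ :=
        lintegral_mono_ae (ae_restrict_of_forall_mem measurableSet_Ioc hB)

lemma lintegral_Ioc_le_Icc {a b : ℝ} (B : ℝ → ℝ≥0∞) :
    (∫⁻ σ in Ioc a b, B σ) ≤ ∫⁻ σ in Icc a b, B σ :=
  lintegral_mono' (Measure.restrict_mono Ioc_subset_Icc_self le_rfl) le_rfl

lemma holder_step (hs : 0 < s) (hs1 : s < 1)
    (hu : Continuous fun p : ℝ × E3 => u p.1 p.2)
    (hud : ∀ t ∈ Icc (0:ℝ) T, Differentiable ℝ (u t))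
    (huV : ∀ t ∈ Icc (0:ℝ) T, ∀ x : E3, ‖fderiv ℝ (u t) x‖ ≤ V t)
    (hVi : IntegrableOn V (Icc (0:ℝ) T))
    (hg : Continuous fun p : ℝ × E3 => g p.1 p.2)
    (hf : ContDiff ℝ 1 (fun p : ℝ × E3 => f p.1 p.2))
    (hpde : ∀ t ∈ Icc (0:ℝ) T, ∀ x : E3,
      deriv (fun τ => f τ x) t + (∑ j : Fin 3, u t x j * pd (f t) j x) = g t x)
    {a b : ℝ} (h0a : 0 ≤ a) (hab : a ≤ b) (hbT : b ≤ T)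
    (hhalf : (∫ σ in a..b, V σ) ≤ 1/2) :
    holderNorm s (f b) ≤ 3 * (holderNorm s (f a) + ∫⁻ σ in Icc a b, holderNorm s (g σ)) := by
  set A := holderNorm s (f a) with hA
  set G := ∫⁻ σ in Icc a b, holderNorm s (g σ) with hG
  -- flows from a terminal point
  have flow : ∀ p : E3, ∃ X : ℝ → E3, Continuous X ∧ X b = p ∧
      (∀ τ ∈ Icc a b, X τ = p - ∫ σ in τ..b, u σ (X σ)) ∧
      f b p = f a (X a) + ∫ σ in a..b, g σ (X σ) := by
    intro p
    obtain ⟨X, hXc, hXeq⟩ := flow_exists hu hud huV hVi h0a hab hbT hhalf p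
    have hXb : X b = p := by
      have := hXeq b ⟨hab, le_rfl⟩
      simpa [intervalIntegral.integral_same] using this
    have hftc := ftc_along_flow hu hg hf hpde h0a hab hbT hXc hXeq
    rw [hXb] at hftc
    exact ⟨X, hXc, hXb, hXeq, hftc⟩
  have hgXcont : ∀ X : ℝ → E3, Continuous X → Continuous fun σ => g σ (X σ) :=
    fun X hX => hg.comp (continuous_id.prodMk hX)
  -- sup part
  have hsup : (⨆ p : E3, ENNReal.ofReal |f b p|) ≤ A + G := by
    refine iSup_le fun p => ?_
    obtain ⟨X, hXc, hXb, hXeq, hftc⟩ := flow p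
    rw [hftc]
    calc ENNReal.ofReal |f a (X a) + ∫ σ in a..b, g σ (X σ)|
        ≤ ENNReal.ofReal (|f a (X a)| + |∫ σ in a..b, g σ (X σ)|) :=
          ENNReal.ofReal_le_ofReal (abs_add_le _ _)
      _ = ENNReal.ofReal |f a (X a)| + ENNReal.ofReal |∫ σ in a..b, g σ (X σ)| :=
          ENNReal.ofReal_add (abs_nonneg _) (abs_nonneg _)
      _ ≤ A + G := by
          refine add_le_add (ofReal_abs_le_holderNorm s (f a) _) ?_
          refine le_trans (ofReal_abs_intervalIntegral_le hab (hgXcont X hXc)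
            (B := fun σ => holderNorm s (g σ)) (fun σ _ => ofReal_abs_le_holderNorm s (g σ) _)) ?_
          exact lintegral_Ioc_le_Icc _
  -- seminorm part
  have hsemi : (⨆ p : E3, ⨆ q : E3, ⨆ _ : p ≠ q,
      ENNReal.ofReal (|f b p - f b q| / ‖p - q‖ ^ s)) ≤ 2 * (A + G) := by
    refine iSup_le fun p => iSup_le fun q => iSup_le fun hne => ?_
    obtain ⟨X, hXc, hXb, hXeq, hftcX⟩ := flow p
    obtain ⟨Y, hYc, hYb, hYeq, hftcY⟩ := flow q
    have hclose : ∀ τ ∈ Icc a b, ‖X τ - Y τ‖ ≤ 2 * ‖p - q‖ :=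
      flows_close hud huV hVi hu h0a hab hbT hhalf hXc hXeq hYc hYeq
    have hr : (0:ℝ) < ‖p - q‖ := by simpa [sub_ne_zero] using hne
    have hrs : (0:ℝ) < ‖p - q‖ ^ s := Real.rpow_pos_of_pos hr s
    set c : ℝ := (2 * ‖p - q‖) ^ s with hc
    have hc0 : 0 ≤ c := Real.rpow_nonneg (by positivity) s
    set D := ENNReal.ofReal (‖p - q‖ ^ s) with hDdef
    have hD0 : D ≠ 0 := by
      rw [hDdef]
      simp [ENNReal.ofReal_eq_zero, not_le, hrs]
    have hDt : D ≠ ⊤ := ENNReal.ofReal_ne_top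
    have hpow_le : ∀ {w : ℝ}, 0 ≤ w → w ≤ 2 * ‖p - q‖ → ENNReal.ofReal (w ^ s) ≤ ENNReal.ofReal c :=
      fun hw hw2 => ENNReal.ofReal_le_ofReal (Real.rpow_le_rpow hw hw2 hs.le)
    -- difference identity
    have hdiff : f b p - f b q
        = (f a (X a) - f a (Y a)) + ∫ σ in a..b, (g σ (X σ) - g σ (Y σ)) := by
      rw [hftcX, hftcY, intervalIntegral.integral_sub
        ((hgXcont X hXc).intervalIntegrable _ _) ((hgXcont Y hYc).intervalIntegrable _ _)]
      ring
    have hkey : ENNReal.ofReal |f b p - f b q| ≤ (ENNReal.ofReal c) * (A + G) := by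
      rw [hdiff]
      calc ENNReal.ofReal |(f a (X a) - f a (Y a)) + ∫ σ in a..b, (g σ (X σ) - g σ (Y σ))|
          ≤ ENNReal.ofReal (|f a (X a) - f a (Y a)|
              + |∫ σ in a..b, (g σ (X σ) - g σ (Y σ))|) :=
            ENNReal.ofReal_le_ofReal (abs_add_le _ _)
        _ = ENNReal.ofReal |f a (X a) - f a (Y a)|
              + ENNReal.ofReal |∫ σ in a..b, (g σ (X σ) - g σ (Y σ))| :=
            ENNReal.ofReal_add (abs_nonneg _) (abs_nonneg _)
        _ ≤ (ENNReal.ofReal c) * A + (ENNReal.ofReal c) * G := by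
            refine add_le_add ?_ ?_
            · refine le_trans (ofReal_abs_sub_le_holderNorm s (f a) _ _) ?_
              rw [mul_comm]
              exact mul_le_mul_left
                (hpow_le (norm_nonneg _) (hclose a ⟨le_rfl, hab⟩)) _
            · refine le_trans (ofReal_abs_intervalIntegral_le hab
                ((hgXcont X hXc).sub (hgXcont Y hYc))
                (B := fun σ => (ENNReal.ofReal c) * holderNorm s (g σ)) ?_) ?_
              · intro σ hσ
                refine le_trans (ofReal_abs_sub_le_holderNorm s (g σ) _ _) ?_
                rw [mul_comm]
                exact mul_le_mul_left
                  (hpow_le (norm_nonneg _) (hclose σ ⟨le_of_lt hσ.1, hσ.2⟩)) _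
              · rw [lintegral_const_mul' _ _ ENNReal.ofReal_ne_top]
                exact mul_le_mul_right (lintegral_Ioc_le_Icc _) _
        _ = (ENNReal.ofReal c) * (A + G) := (mul_add _ _ _).symm
    have hcD : ENNReal.ofReal c = ENNReal.ofReal ((2:ℝ) ^ s) * D := by
      rw [hc, Real.mul_rpow (by norm_num) (norm_nonneg _), hDdef,
        ENNReal.ofReal_mul (Real.rpow_nonneg (by norm_num) s)]
    have h2s : ENNReal.ofReal ((2:ℝ) ^ s) ≤ 2 := by
      calc ENNReal.ofReal ((2:ℝ) ^ s) ≤ ENNReal.ofReal ((2:ℝ) ^ (1:ℝ)) :=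
            ENNReal.ofReal_le_ofReal
              (Real.rpow_le_rpow_of_exponent_le (by norm_num) hs1.le)
        _ = 2 := by rw [Real.rpow_one]; exact ENNReal.ofReal_ofNat 2
    rw [ENNReal.ofReal_div_of_pos hrs, ← hDdef]
    rw [ENNReal.div_le_iff_le_mul (Or.inl hD0) (Or.inl hDt)]
    calc ENNReal.ofReal |f b p - f b q| ≤ (ENNReal.ofReal c) * (A + G) := hkey
      _ = (ENNReal.ofReal ((2:ℝ) ^ s) * (A + G)) * D := by rw [hcD]; ring
      _ ≤ (2 * (A + G)) * D := mul_le_mul_left (mul_le_mul_left h2s _) _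
  calc holderNorm s (f b) ≤ (A + G) + 2 * (A + G) := add_le_add hsup hsemi
    _ = 3 * (A + G) := by ring

end step

section iterate
variable {s T : ℝ} {u : ℝ → E3 → E3} {g f : ℝ → E3 → ℝ} {V : ℝ → ℝ}

lemma lintegral_Icc_split {B : ℝ → ℝ≥0∞} {a c b : ℝ} (hac : a ≤ c) (hcb : c ≤ b) :
    (∫⁻ σ in Icc a c, B σ) + (∫⁻ σ in Icc c b, B σ) ≤ ∫⁻ σ in Icc a b, B σ := by
  have h1 : ∀ x y : ℝ, (∫⁻ σ in Icc x y, B σ) = ∫⁻ σ in Ioc x y, B σ := by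
    intro x y
    rw [Measure.restrict_congr_set Ioc_ae_eq_Icc]
  rw [h1 a c, h1 c b, h1 a b, ← Ioc_union_Ioc_eq_Ioc hac hcb,
    Measure.restrict_union (Ioc_disjoint_Ioc_of_le le_rfl) measurableSet_Ioc,
    lintegral_add_measure]

lemma holder_iterate (hs : 0 < s) (hs1 : s < 1)
    (hu : Continuous fun p : ℝ × E3 => u p.1 p.2)
    (hud : ∀ t ∈ Icc (0:ℝ) T, Differentiable ℝ (u t))
    (huV : ∀ t ∈ Icc (0:ℝ) T, ∀ x : E3, ‖fderiv ℝ (u t) x‖ ≤ V t)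
    (hVi : IntegrableOn V (Icc (0:ℝ) T))
    (hg : Continuous fun p : ℝ × E3 => g p.1 p.2)
    (hf : ContDiff ℝ 1 (fun p : ℝ × E3 => f p.1 p.2))
    (hpde : ∀ t ∈ Icc (0:ℝ) T, ∀ x : E3,
      deriv (fun τ => f τ x) t + (∑ j : Fin 3, u t x j * pd (f t) j x) = g t x) :
    ∀ n : ℕ, ∀ a b : ℝ, 0 ≤ a → a ≤ b → b ≤ T →
      (∫ σ in a..b, V σ) ≤ ((n:ℝ) + 1)/2 →
      holderNorm s (f b)
        ≤ 3^(n+1) * (holderNorm s (f a) + ∫⁻ σ in Icc a b, holderNorm s (g σ)) := by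
  intro n
  induction n with
  | zero =>
    intro a b h0a hab hbT hint
    have h12 : (∫ σ in a..b, V σ) ≤ 1/2 := by
      push_cast at hint; linarith
    simpa [pow_one] using holder_step hs hs1 hu hud huV hVi hg hf hpde h0a hab hbT h12
  | succ n ih =>
    intro a b h0a hab hbT hint
    have h3pow : (3:ℝ≥0∞) ≤ 3^(n+2) :=
      calc (3:ℝ≥0∞) = 3^1 := (pow_one _).symm
        _ ≤ 3^(n+2) := pow_le_pow_right₀ (by norm_num) (by omega)
    by_cases hsmall : (∫ σ in a..b, V σ) ≤ 1/2
    · refine le_trans (holder_step hs hs1 hu hud huV hVi hg hf hpde h0a hab hbT hsmall) ?_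
      exact mul_le_mul_left h3pow _
    · push_neg at hsmall
      -- find an intermediate cut point
      have hWc : ContinuousOn (fun r => ∫ σ in a..r, V σ) (Icc a b) := by
        have := intervalIntegral.continuousOn_primitive_interval
          (f := V) (μ := volume) (a := a) (b := b) ?_
        · rwa [uIcc_of_le hab] at this
        · rw [uIcc_of_le hab]
          exact hVi.mono_set (Icc_subset_Icc h0a hbT)
      have hWa : (∫ σ in a..a, V σ) = 0 := intervalIntegral.integral_same
      have hmem : (∫ σ in a..b, V σ) - 1/2 ∈
          Icc (∫ σ in a..a, V σ) (∫ σ in a..b, V σ) := by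
        rw [hWa]
        constructor <;> linarith
      obtain ⟨c, hcmem, hWceq'⟩ := intermediate_value_Icc hab hWc hmem
      have hWceq : (∫ σ in a..c, V σ) = (∫ σ in a..b, V σ) - 1/2 := hWceq'
      have h0c : 0 ≤ c := le_trans h0a hcmem.1
      have hcT : c ≤ T := le_trans hcmem.2 hbT
      have hadd : (∫ σ in a..c, V σ) + (∫ σ in c..b, V σ) = ∫ σ in a..b, V σ :=
        intervalIntegral.integral_add_adjacent_intervals
          (intervalIntegrable_V hVi h0a hcmem.1 hcT)
          (intervalIntegrable_V hVi h0c hcmem.2 hbT)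
      have hcb_half : (∫ σ in c..b, V σ) ≤ 1/2 := by
        linarith [hadd, hWceq]
      have hac_bound : (∫ σ in a..c, V σ) ≤ ((n:ℝ) + 1)/2 := by
        push_cast at hint
        linarith [hWceq]
      have hstep := holder_step hs hs1 hu hud huV hVi hg hf hpde h0c hcmem.2 hbT hcb_half
      have hih := ih a c h0a hcmem.1 hcT hac_bound
      have hone : (1:ℝ≥0∞) ≤ 3^(n+1) := one_le_pow_of_one_le' (by norm_num) _
      calc holderNorm s (f b)
          ≤ 3 * (holderNorm s (f c) + ∫⁻ σ in Icc c b, holderNorm s (g σ)) := hstep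
        _ ≤ 3 * (3^(n+1) * (holderNorm s (f a) + ∫⁻ σ in Icc a c, holderNorm s (g σ))
              + 3^(n+1) * ∫⁻ σ in Icc c b, holderNorm s (g σ)) := by
            refine mul_le_mul_right (add_le_add hih ?_) _
            exact le_mul_of_one_le_left' hone
        _ = 3^(n+2) * (holderNorm s (f a)
              + ((∫⁻ σ in Icc a c, holderNorm s (g σ)) + ∫⁻ σ in Icc c b, holderNorm s (g σ))) := by
            rw [← mul_add, ← mul_assoc]
            rw [show (3:ℝ≥0∞) * 3^(n+1) = 3^(n+2) by rw [← pow_succ']]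
            congr 1
            rw [add_assoc]
        _ ≤ 3^(n+2) * (holderNorm s (f a) + ∫⁻ σ in Icc a b, holderNorm s (g σ)) := by
            refine mul_le_mul_right (add_le_add le_rfl ?_) _
            exact lintegral_Icc_split hcmem.1 hcmem.2

end iterate

theorem transport_holder_estimate' (s : ℝ) (hs : 0 < s) (hs1 : s < 1) :
    ∃ C : ℝ, 0 < C ∧
      ∀ (T : ℝ), 0 < T →
      ∀ (u : ℝ → E3 → E3) (g f : ℝ → E3 → ℝ) (f₀ : E3 → ℝ) (V : ℝ → ℝ),
        Continuous (fun p : ℝ × E3 => u p.1 p.2) →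
        (∀ t ∈ Set.Icc (0:ℝ) T, Differentiable ℝ (u t)) →
        (∀ t ∈ Set.Icc (0:ℝ) T, ∀ x : E3, ‖fderiv ℝ (u t) x‖ ≤ V t) →
        IntegrableOn V (Set.Icc (0:ℝ) T) →
        Continuous (fun p : ℝ × E3 => g p.1 p.2) →
        (∫⁻ t in Set.Icc (0:ℝ) T, holderNorm s (g t)) < ⊤ →
        ContDiff ℝ 1 (fun p : ℝ × E3 => f p.1 p.2) →
        (∃ M : ℝ, ∀ t ∈ Set.Icc (0:ℝ) T, ∀ x : E3, |f t x| ≤ M) →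
        (∀ t ∈ Set.Icc (0:ℝ) T, ∀ x : E3,
          deriv (fun τ => f τ x) t + (∑ j : Fin 3, u t x j * pd (f t) j x) = g t x) →
        f 0 = f₀ →
        holderNorm s f₀ < ⊤ →
        ∀ t ∈ Set.Icc (0:ℝ) T,
          holderNorm s (f t)
            ≤ ENNReal.ofReal (C * Real.exp (C * ∫ τ in (0:ℝ)..t, V τ))
                * (holderNorm s f₀ + ∫⁻ τ in Set.Icc (0:ℝ) t, holderNorm s (g τ)) := by
  refine ⟨9, by norm_num, ?_⟩
  intro T hT u g f f₀ V hu hud huV hVi hg hgfin hf hfbdd hpde hf0 hf₀fin t ht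
  set A : ℝ := ∫ τ in (0:ℝ)..t, V τ with hAdef
  have hA0 : 0 ≤ A :=
    intervalIntegral.integral_nonneg ht.1
      (fun σ hσ => V_nonneg huV ⟨hσ.1, le_trans hσ.2 ht.2⟩)
  set n : ℕ := ⌈2*A⌉₊ with hn
  have hA_le : A ≤ ((n:ℝ) + 1)/2 := by
    have h1 : 2*A ≤ (n:ℝ) := Nat.le_ceil _
    linarith
  have hiter := holder_iterate hs hs1 hu hud huV hVi hg hf hpde n 0 t le_rfl ht.1 ht.2 hA_le
  rw [hf0] at hiter
  refine le_trans hiter (mul_le_mul_left ?_ _)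
  -- 3 ^ (n+1) ≤ ofReal (9 * exp (9 * A))
  have hcast : (3:ℝ≥0∞)^(n+1) = ENNReal.ofReal ((3:ℝ)^(n+1)) := by
    rw [ENNReal.ofReal_pow (by norm_num)]
    norm_num
  rw [hcast]
  refine ENNReal.ofReal_le_ofReal ?_
  have hlog3 : (0:ℝ) ≤ Real.log 3 := Real.log_nonneg (by norm_num)
  have hlog3' : Real.log 3 ≤ 2 := by
    have := Real.log_le_sub_one_of_pos (x := 3) (by norm_num)
    linarith
  have hn2 : ((n:ℝ) + 1) ≤ 2*A + 2 := by
    have := Nat.ceil_lt_add_one (by linarith : (0:ℝ) ≤ 2*A)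
    rw [← hn] at this
    linarith
  have h3exp : (3:ℝ)^(n+1) = Real.exp (((n:ℕ) + 1 : ℕ) * Real.log 3) := by
    rw [Real.exp_nat_mul, Real.exp_log (by norm_num)]
  rw [h3exp]
  have h9 : Real.exp ((2*A + 2) * Real.log 3) ≤ 9 * Real.exp (9 * A) := by
    have hsplit : (2*A + 2) * Real.log 3 = 2*A*Real.log 3 + 2*Real.log 3 := by ring
    rw [hsplit, Real.exp_add]
    have he1 : Real.exp (2*A*Real.log 3) ≤ Real.exp (9*A) := by
      apply Real.exp_le_exp.2
      nlinarith
    have he2 : Real.exp (2*Real.log 3) = 9 := by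
      rw [show (2:ℝ) * Real.log 3 = ((2:ℕ):ℝ) * Real.log 3 by norm_num,
        Real.exp_nat_mul, Real.exp_log (by norm_num)]
      norm_num
    rw [he2]
    calc Real.exp (2*A*Real.log 3) * 9 ≤ Real.exp (9*A) * 9 :=
          mul_le_mul_of_nonneg_right he1 (by norm_num)
      _ = 9 * Real.exp (9*A) := mul_comm _ _
  refine le_trans ?_ h9
  apply Real.exp_le_exp.2
  have : ((n:ℕ) + 1 : ℕ) = ((n:ℝ) + 1) := by push_cast; ring
  rw [this]
  exact mul_le_mul_of_nonneg_right hn2 hlog3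

/-- Hölder estimate for the transport equation: for `0 < s < 1` there is
`C = C(s)` such that any bounded `C¹` solution of `∂ₜf + u·∇f = g` satisfies
`‖f(t)‖_{C^s} ≤ C e^{C∫₀ᵗ V} (‖f₀‖_{C^s} + ∫₀ᵗ ‖g(τ)‖_{C^s} dτ)`, where `V(t)` bounds
`‖∇ₓu(t)‖_{L^∞}`. -/
theorem transport_holder_estimate (s : ℝ) (hs : 0 < s) (hs1 : s < 1) :
    ∃ C : ℝ, 0 < C ∧
      ∀ (T : ℝ), 0 < T →
      ∀ (u : ℝ → E3 → E3) (g f : ℝ → E3 → ℝ) (f₀ : E3 → ℝ) (V : ℝ → ℝ),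
        Continuous (fun p : ℝ × E3 => u p.1 p.2) →
        (∀ t ∈ Set.Icc (0:ℝ) T, Differentiable ℝ (u t)) →
        (∀ t ∈ Set.Icc (0:ℝ) T, ∀ x : E3, ‖fderiv ℝ (u t) x‖ ≤ V t) →
        IntegrableOn V (Set.Icc (0:ℝ) T) →
        Continuous (fun p : ℝ × E3 => g p.1 p.2) →
        (∫⁻ t in Set.Icc (0:ℝ) T, holderNorm s (g t)) < ⊤ →
        ContDiff ℝ 1 (fun p : ℝ × E3 => f p.1 p.2) →
        (∃ M : ℝ, ∀ t ∈ Set.Icc (0:ℝ) T, ∀ x : E3, |f t x| ≤ M) →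
        (∀ t ∈ Set.Icc (0:ℝ) T, ∀ x : E3,
          deriv (fun τ => f τ x) t + (∑ j : Fin 3, u t x j * pd (f t) j x) = g t x) →
        f 0 = f₀ →
        holderNorm s f₀ < ⊤ →
        ∀ t ∈ Set.Icc (0:ℝ) T,
          holderNorm s (f t)
            ≤ ENNReal.ofReal (C * Real.exp (C * ∫ τ in (0:ℝ)..t, V τ))
                * (holderNorm s f₀ + ∫⁻ τ in Set.Icc (0:ℝ) t, holderNorm s (g τ)) := by
  exact transport_holder_estimate' s hs hs1
end
end
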